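/- arXiv:2603.06908 — 3 statements merged into one kernel-verified Lean document; each statement's English description precedes it below -/
import Mathlib

section
/- Let n ≥ 1, let Ω ⊂ ℝⁿ be a nonempty bounded open set, let p ∈ (1,∞) be a real number, and let m ≥ 1 be a natural number. Assume that for every real number s with s < p−1 there exists a constant C_s > 0 such that the weighted Hardy inequality ∫_Ω |φ(x)|^p ρ(x)^{s−p} dx ≤ C_s ∫_Ω |∇φ(x)|^p ρ(x)^s dx holds for all φ ∈ C_c^∞(Ω), where |∇φ(x)| is the Euclidean norm of the gradient. Then there exists a constant C > 0 such that ∫_Ω |φ(x)|^p ρ(x)^{−mp} dx ≤ C ∫_Ω ‖D^m φ(x)‖^p dx for all φ ∈ C_c^∞(Ω), where ‖D^m φ(x)‖ denotes the operator norm of the m-th (iterated Fréchet) derivative of φ at x. -/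
/-!
Induction on `m`. For the step from `k` to `k + 1`, apply the weighted Hardy inequality with
`s = -k p` to `φ`, bound `‖Dφ‖ ^ p` by `d ^ (p - 1) ∑ |∂ᵢφ| ^ p` along an orthonormal basis, and
apply the order-`k` inequality to each `∂ᵢφ`: it is again a test function, and its `k`-th
derivative is dominated by the `(k + 1)`-th derivative of `φ`.
-/

open MeasureTheory Metric Module

section TestFunctions

variable {E : Type*} [NormedAddCommGroup E] [NormedSpace ℝ E]

def IsTestFunctionOn (Ω : Set E) (φ : E → ℝ) : Prop :=
  ContDiff ℝ (⊤ : ℕ∞) φ ∧ HasCompactSupport φ ∧ tsupport φ ⊆ Ω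

variable {Ω : Set E} {φ : E → ℝ}

theorem IsTestFunctionOn.fderiv_apply (hφ : IsTestFunctionOn Ω φ) (v : E) :
    IsTestFunctionOn Ω (fderiv ℝ φ · v) :=
  ⟨(hφ.1.fderiv_right (by exact_mod_cast le_top)).clm_apply contDiff_const,
    hφ.2.1.fderiv_apply ℝ v, (tsupport_fderiv_apply_subset ℝ v).trans hφ.2.2⟩

theorem norm_iteratedFDeriv_fderiv_apply_le (hφ : ContDiff ℝ (⊤ : ℕ∞) φ) (k : ℕ) (v x : E) :
    ‖iteratedFDeriv ℝ k (fderiv ℝ φ · v) x‖ ≤ ‖v‖ * ‖iteratedFDeriv ℝ (k + 1) φ x‖ := by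
  rw [← norm_iteratedFDeriv_fderiv]
  exact norm_iteratedFDeriv_clm_apply_const
    (hφ.fderiv_right (m := (⊤ : ℕ∞)) (by exact_mod_cast le_top)).contDiffAt
    (by exact_mod_cast le_top)

theorem IsTestFunctionOn.integrableOn_rpow_mul [MeasurableSpace E] [BorelSpace E] {μ : Measure E}
    [IsFiniteMeasureOnCompacts μ] (hφ : IsTestFunctionOn Ω φ) (hΩ : IsOpen Ω) {p : ℝ}
    (hp : 0 < p) {w : E → ℝ} (hw : ContinuousOn w Ω) :
    IntegrableOn (fun x => |φ x| ^ p * w x) Ω μ := by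
  refine IntegrableOn.of_forall_sdiff_eq_zero (s := tsupport φ) ?_ hΩ.measurableSet fun x hx => ?_
  · exact ContinuousOn.integrableOn_compact hφ.2.1
      ((hφ.1.continuous.abs.rpow_const fun _ => Or.inr hp.le).continuousOn.mul (hw.mono hφ.2.2))
  · simp [image_eq_zero_of_notMem_tsupport hx.2, Real.zero_rpow hp.ne']

theorem IsTestFunctionOn.integrable_norm_iteratedFDeriv_rpow [MeasurableSpace E] [BorelSpace E]
    {μ : Measure E} [IsFiniteMeasureOnCompacts μ] (hφ : IsTestFunctionOn Ω φ) {p : ℝ}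
    (hp : 0 < p) (k : ℕ) :
    Integrable (fun x => ‖iteratedFDeriv ℝ k φ x‖ ^ p) μ := by
  refine Continuous.integrable_of_hasCompactSupport ?_ ?_
  · exact (hφ.1.continuous_iteratedFDeriv (by exact_mod_cast le_top)).norm.rpow_const
      fun _ => Or.inr hp.le
  · exact (hφ.2.1.iteratedFDeriv k).comp_left (g := fun y => ‖y‖ ^ p)
      (by simp [Real.zero_rpow hp.ne'])

end TestFunctions

theorem continuousOn_infDist_frontier_rpow {X : Type*} [MetricSpace X] {Ω : Set X}
    (hΩ : IsOpen Ω) (s : ℝ) : ContinuousOn (fun x => infDist x (frontier Ω) ^ s) Ω := by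
  rcases (frontier Ω).eq_empty_or_nonempty with h | h
  -- `infDist x ∅ = 0`, so the weight is the constant `0 ^ s`
  · simp only [h, infDist_empty]
    exact continuousOn_const
  refine (continuous_infDist_pt _).continuousOn.rpow_const fun x hx => Or.inl ?_
  refine ((isClosed_frontier.notMem_iff_infDist_pos h).1 fun hxF => ?_).ne'
  exact (hΩ.frontier_eq ▸ hxF).2 hx

namespace OrthonormalBasis

variable {ι E : Type*} [Fintype ι] [NormedAddCommGroup E] [InnerProductSpace ℝ E]

theorem opNorm_le_sum_abs (b : OrthonormalBasis ι ℝ E) (L : E →L[ℝ] ℝ) :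
    ‖L‖ ≤ ∑ i, |L (b i)| := by
  refine L.opNorm_le_bound (Finset.sum_nonneg fun i _ => abs_nonneg _) fun v => ?_
  calc ‖L v‖ = |∑ i, inner ℝ (b i) v * L (b i)| := by
        conv_lhs => rw [← b.sum_repr' v]
        simp [Real.norm_eq_abs]
    _ ≤ ∑ i, |inner ℝ (b i) v| * |L (b i)| := by
        simpa only [abs_mul] using
          Finset.abs_sum_le_sum_abs (fun i => inner ℝ (b i) v * L (b i)) Finset.univ
    _ ≤ ∑ i, ‖v‖ * |L (b i)| := by
        gcongr with i
        simpa [b.orthonormal.1 i] using abs_real_inner_le_norm (b i) v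
    _ = (∑ i, |L (b i)|) * ‖v‖ := by rw [Finset.sum_mul]; simp only [mul_comm]

theorem opNorm_rpow_le (b : OrthonormalBasis ι ℝ E) (L : E →L[ℝ] ℝ) {p : ℝ} (hp : 1 ≤ p) :
    ‖L‖ ^ p ≤ (Fintype.card ι : ℝ) ^ (p - 1) * ∑ i, |L (b i)| ^ p :=
  (Real.rpow_le_rpow (norm_nonneg _) (b.opNorm_le_sum_abs L) (by linarith)).trans
    (Real.rpow_sum_le_const_mul_sum_rpow _ _ hp)

end OrthonormalBasis

theorem integral_norm_fderiv_rpow_mul_le {E : Type*} [NormedAddCommGroup E]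
    [InnerProductSpace ℝ E] [FiniteDimensional ℝ E] [MeasurableSpace E] [BorelSpace E]
    {μ : Measure E} [IsFiniteMeasureOnCompacts μ] {Ω : Set E} (hΩ : IsOpen Ω) {p : ℝ}
    (hp : 1 ≤ p) {w : E → ℝ} (hw : ContinuousOn w Ω) (hw0 : ∀ x, 0 ≤ w x) {k : ℕ} {C : ℝ}
    (hC : 0 ≤ C) (hk : ∀ ψ, IsTestFunctionOn Ω ψ →
      ∫ x in Ω, |ψ x| ^ p * w x ∂μ ≤ C * ∫ x in Ω, ‖iteratedFDeriv ℝ k ψ x‖ ^ p ∂μ)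
    {φ : E → ℝ} (hφ : IsTestFunctionOn Ω φ) :
    ∫ x in Ω, ‖fderiv ℝ φ x‖ ^ p * w x ∂μ ≤
      (finrank ℝ E : ℝ) ^ p * C * ∫ x in Ω, ‖iteratedFDeriv ℝ (k + 1) φ x‖ ^ p ∂μ := by
  set b := stdOrthonormalBasis ℝ E
  set d : ℝ := (finrank ℝ E : ℝ)
  set I := ∫ x in Ω, ‖iteratedFDeriv ℝ (k + 1) φ x‖ ^ p ∂μ
  have hp0 : 0 < p := by linarith
  have hint : ∀ i, IntegrableOn (fun x => |fderiv ℝ φ x (b i)| ^ p * w x) Ω μ := fun i =>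
    (hφ.fderiv_apply (b i)).integrableOn_rpow_mul hΩ hp0 hw
  have hpartial : ∀ i, ∫ x in Ω, |fderiv ℝ φ x (b i)| ^ p * w x ∂μ ≤ C * I := fun i => by
    refine (hk _ (hφ.fderiv_apply (b i))).trans (mul_le_mul_of_nonneg_left ?_ hC)
    refine integral_mono_of_nonneg (.of_forall fun x => by positivity)
      (hφ.integrable_norm_iteratedFDeriv_rpow hp0 (k + 1)).integrableOn
      (.of_forall fun x => Real.rpow_le_rpow (norm_nonneg _) ?_ hp0.le)
    simpa [b.orthonormal.1 i] using norm_iteratedFDeriv_fderiv_apply_le hφ.1 k (b i) x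
  calc ∫ x in Ω, ‖fderiv ℝ φ x‖ ^ p * w x ∂μ
      ≤ ∫ x in Ω, d ^ (p - 1) * ∑ i, |fderiv ℝ φ x (b i)| ^ p * w x ∂μ := by
        refine integral_mono_of_nonneg (.of_forall fun x => mul_nonneg (by positivity) (hw0 x))
          ((integrable_finsetSum _ fun i _ => hint i).const_mul _) (.of_forall fun x => ?_)
        dsimp only
        rw [← Finset.sum_mul, ← mul_assoc]
        refine mul_le_mul_of_nonneg_right ?_ (hw0 x)
        simpa [d] using b.opNorm_rpow_le (fderiv ℝ φ x) hp
    _ = d ^ (p - 1) * ∑ i, ∫ x in Ω, |fderiv ℝ φ x (b i)| ^ p * w x ∂μ := by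
        rw [integral_const_mul, integral_finsetSum _ fun i _ => hint i]
    _ ≤ d ^ (p - 1) * ∑ _i : Fin (finrank ℝ E), C * I := by gcongr with i; exact hpartial i
    _ = d ^ p * C * I := by
        rw [Finset.sum_const, Finset.card_univ, Fintype.card_fin, nsmul_eq_mul, ← mul_assoc,
          ← mul_assoc, ← Real.rpow_add_one' (by positivity) (by linarith), sub_add_cancel]

theorem exists_integral_rpow_mul_infDist_rpow_le {E : Type*} [NormedAddCommGroup E]
    [InnerProductSpace ℝ E] [FiniteDimensional ℝ E] [MeasurableSpace E] [BorelSpace E]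
    {μ : Measure E} [IsFiniteMeasureOnCompacts μ] {Ω : Set E} (hΩ : IsOpen Ω) {p : ℝ}
    (hp : 1 < p)
    (hHardy : ∀ s : ℝ, s < p - 1 → ∃ C : ℝ, 0 ≤ C ∧ ∀ φ, IsTestFunctionOn Ω φ →
      ∫ x in Ω, |φ x| ^ p * infDist x (frontier Ω) ^ (s - p) ∂μ ≤
        C * ∫ x in Ω, ‖fderiv ℝ φ x‖ ^ p * infDist x (frontier Ω) ^ s ∂μ)
    (m : ℕ) :
    ∃ C : ℝ, 0 ≤ C ∧ ∀ φ, IsTestFunctionOn Ω φ →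
      ∫ x in Ω, |φ x| ^ p * infDist x (frontier Ω) ^ (-((m : ℝ) * p)) ∂μ ≤
        C * ∫ x in Ω, ‖iteratedFDeriv ℝ m φ x‖ ^ p ∂μ := by
  induction m with
  | zero => exact ⟨1, zero_le_one, fun φ _ => by simp [Real.norm_eq_abs]⟩
  | succ k ih =>
    obtain ⟨Ck, hCk, hk⟩ := ih
    obtain ⟨Cs, hCs, hs⟩ := hHardy (-((k : ℝ) * p)) (by nlinarith [(k.cast_nonneg : (0 : ℝ) ≤ k)])
    refine ⟨Cs * ((finrank ℝ E : ℝ) ^ p * Ck), by positivity, fun φ hφ => ?_⟩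
    have hexp : -(((k + 1 : ℕ) : ℝ) * p) = -((k : ℝ) * p) - p := by push_cast; ring
    rw [hexp, mul_assoc]
    exact (hs φ hφ).trans <| mul_le_mul_of_nonneg_left
      (integral_norm_fderiv_rpow_mul_le hΩ hp.le (continuousOn_infDist_frontier_rpow hΩ _)
        (fun x => Real.rpow_nonneg infDist_nonneg _) hCk hk hφ) hCs

theorem stmt_1_general (n : ℕ) (Ω : Set (EuclideanSpace ℝ (Fin n))) (hΩo : IsOpen Ω)
    (p : ℝ) (hp1 : 1 < p) (m : ℕ)
    (hHardy : ∀ s : ℝ, s < p - 1 → ∃ C : ℝ, 0 < C ∧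
      ∀ φ : EuclideanSpace ℝ (Fin n) → ℝ, ContDiff ℝ (⊤ : ℕ∞) φ →
        HasCompactSupport φ → tsupport φ ⊆ Ω →
        ∫ x in Ω, |φ x| ^ p * infDist x (frontier Ω) ^ (s - p) ≤
          C * ∫ x in Ω, ‖fderiv ℝ φ x‖ ^ p * infDist x (frontier Ω) ^ s) :
    ∃ C : ℝ, 0 < C ∧
      ∀ φ : EuclideanSpace ℝ (Fin n) → ℝ, ContDiff ℝ (⊤ : ℕ∞) φ →
        HasCompactSupport φ → tsupport φ ⊆ Ω →
        ∫ x in Ω, |φ x| ^ p * infDist x (frontier Ω) ^ (-((m : ℝ) * p)) ≤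
          C * ∫ x in Ω, ‖iteratedFDeriv ℝ m φ x‖ ^ p := by
  obtain ⟨C, hC, hbound⟩ := exists_integral_rpow_mul_infDist_rpow_le hΩo hp1
    (fun s hs => (hHardy s hs).imp fun C ⟨hC, h⟩ => ⟨hC.le, fun φ hφ => h φ hφ.1 hφ.2.1 hφ.2.2⟩) m
  refine ⟨C + 1, by positivity, fun φ hφ hφc hφΩ => (hbound φ ⟨hφ, hφc, hφΩ⟩).trans ?_⟩
  exact mul_le_mul_of_nonneg_right (by linarith) (integral_nonneg fun x => by positivity)

/-- Integer-order Hardy-type inequality: assuming the weighted Hardy inequality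
for all exponents `s < p - 1`, one can bound the weighted `L^p` norm
`∫_Ω |φ|^p ρ^{-mp}` by the `L^p` norm of the `m`-th derivative, for all
test functions `φ ∈ C_c^∞(Ω)`. -/
theorem stmt_1 (n : ℕ) (hn : 1 ≤ n) (Ω : Set (EuclideanSpace ℝ (Fin n)))
    (hΩo : IsOpen Ω) (hΩne : Ω.Nonempty) (hΩb : Bornology.IsBounded Ω)
    (p : ℝ) (hp1 : 1 < p) (m : ℕ) (hm : 1 ≤ m)
    (hHardy : ∀ s : ℝ, s < p - 1 → ∃ C : ℝ, 0 < C ∧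
      ∀ φ : EuclideanSpace ℝ (Fin n) → ℝ, ContDiff ℝ (⊤ : ℕ∞) φ →
        HasCompactSupport φ → tsupport φ ⊆ Ω →
        ∫ x in Ω, |φ x| ^ p * infDist x (frontier Ω) ^ (s - p) ≤
          C * ∫ x in Ω, ‖fderiv ℝ φ x‖ ^ p * infDist x (frontier Ω) ^ s) :
    ∃ C : ℝ, 0 < C ∧
      ∀ φ : EuclideanSpace ℝ (Fin n) → ℝ, ContDiff ℝ (⊤ : ℕ∞) φ →
        HasCompactSupport φ → tsupport φ ⊆ Ω →
        ∫ x in Ω, |φ x| ^ p * infDist x (frontier Ω) ^ (-((m : ℝ) * p)) ≤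
          C * ∫ x in Ω, ‖iteratedFDeriv ℝ m φ x‖ ^ p :=
  stmt_1_general n Ω hΩo p hp1 m hHardy
end

section
/- Let n ≥ 1, let Ω ⊂ ℝⁿ be a nonempty bounded open set, let m ≥ 1 be a natural number, let θ ∈ (1,2], let p̄ ∈ (2,∞], and define ϑ ∈ (1,∞) by 1/ϑ = 1/θ − 1/p̄. Let γ > 0 and C_γ > 0, and let w be a real-valued function that is continuous on the closure of Ω, differentiable on Ω, satisfies w(x) ≥ C_γ ρ(x)^γ for all x ∈ Ω, and whose gradient ∇w lies in L^{p̄}(Ω). Then there exists a constant C > 0, depending only on m, C_γ, ‖∇w‖_{L^{p̄}(Ω)}, the supremum of |w| over the closure of Ω, and the Lebesgue measure of Ω, such that for every φ ∈ C_c^∞(Ω) the function x ↦ w(x)^{−m} φ(x) on Ω satisfies ‖w^{−m}φ‖_{L^θ(Ω)} + ‖∇(w^{−m}φ)‖_{L^θ(Ω)} ≤ C ( ‖ρ^{−(m+1)γ} φ‖_{L^ϑ(Ω)} + ‖ρ^{−mγ} ∇φ‖_{L^θ(Ω)} ). -/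
open MeasureTheory Metric ENNReal

/-!
Write `ρ` for the distance to `∂Ω`. The lower bound `w ≥ C_γ ρ^γ` gives `w^{-k} ≤ C_γ^{-k} ρ^{-kγ}`,
and `ρ ≤ diam Ω` trades a factor `ρ^γ` for `(diam Ω)^γ`. Hence `|w^{-m} φ|` is bounded pointwise
by a multiple of `ρ^{-(m+1)γ} |φ|`, whose `L^θ` norm is controlled by its `L^ϑ` norm because `Ω`
has finite measure. By the quotient rule, `∇(w^{-m} φ) = w^{-m} ∇φ - m w^{-m-1} φ ∇w`: the first
term is bounded by a multiple of `ρ^{-mγ} |∇φ|`, the second by a multiple of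
`ρ^{-(m+1)γ} |φ| |∇w|`, whose `L^θ` norm Hölder's inequality (`1/θ = 1/ϑ + 1/p̄`) bounds by
`‖ρ^{-(m+1)γ} φ‖_{L^ϑ} ‖∇w‖_{L^p̄}`.
-/

theorem inv_pow_le_of_mul_rpow_le {C r w γ : ℝ} (hC : 0 < C) (hr : 0 < r)
    (hw : C * r ^ γ ≤ w) (k : ℕ) : (w ^ k)⁻¹ ≤ C⁻¹ ^ k * r ^ (-(k * γ)) := by
  calc (w ^ k)⁻¹ ≤ ((C * r ^ γ) ^ k)⁻¹ := inv_anti₀ (by positivity) (by gcongr)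
    _ = C⁻¹ ^ k * r ^ (-(k * γ)) := by
      rw [mul_pow, mul_inv, inv_pow, ← Real.rpow_natCast (r ^ γ), ← Real.rpow_mul hr.le,
        ← Real.rpow_neg hr.le, mul_comm γ]

theorem rpow_neg_mul_le_mul_rpow_neg_add_one_mul {r K γ : ℝ} (hr : 0 < r) (hrK : r ≤ K)
    (hγ : 0 ≤ γ) (a : ℝ) : r ^ (-(a * γ)) ≤ K ^ γ * r ^ (-((a + 1) * γ)) :=
  calc r ^ (-(a * γ)) = r ^ γ * r ^ (-((a + 1) * γ)) := by
        rw [← Real.rpow_add hr]; ring_nf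
    _ ≤ K ^ γ * r ^ (-((a + 1) * γ)) := by gcongr

section Derivative

variable {E : Type*} [NormedAddCommGroup E] [NormedSpace ℝ E] {φ w : E → ℝ} {x : E}

theorem HasFDerivAt.div_pow {φ' w' : E →L[ℝ] ℝ} (hφ : HasFDerivAt φ φ' x)
    (hw : HasFDerivAt w w' x) (hx : w x ≠ 0) (m : ℕ) :
    HasFDerivAt (fun y => φ y / w y ^ m)
      ((w x ^ m)⁻¹ • φ' - (m * φ x * (w x ^ (m + 1))⁻¹) • w') x := by
  have hzpow := (hasDerivAt_zpow (-(m : ℤ)) (w x) (Or.inl hx)).comp_hasFDerivAt x hw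
  have hfun : (fun y => φ y / w y ^ m) = fun y => φ y * w y ^ (-(m : ℤ)) := by
    simp [div_eq_mul_inv]
  rw [hfun]
  refine (hφ.mul hzpow).congr_fderiv ?_
  rw [show -(m : ℤ) - 1 = -((m + 1 : ℕ) : ℤ) by push_cast; ring]
  simp only [zpow_neg, zpow_natCast, Function.comp_apply]
  ext v
  simp
  ring

theorem norm_fderiv_div_pow_le (hφ : DifferentiableAt ℝ φ x) (hw : DifferentiableAt ℝ w x)
    (hx : 0 < w x) (m : ℕ) :
    ‖fderiv ℝ (fun y => φ y / w y ^ m) x‖ ≤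
      (w x ^ m)⁻¹ * ‖fderiv ℝ φ x‖ + m * (w x ^ (m + 1))⁻¹ * (‖φ x‖ * ‖fderiv ℝ w x‖) := by
  rw [(hφ.hasFDerivAt.div_pow hw.hasFDerivAt hx.ne' m).fderiv]
  refine (norm_sub_le _ _).trans_eq ?_
  rw [norm_smul, norm_smul, Real.norm_of_nonneg (by positivity), norm_mul, norm_mul,
    Real.norm_natCast, Real.norm_of_nonneg (by positivity : 0 ≤ (w x ^ (m + 1))⁻¹)]
  ring

end Derivative

theorem infDist_frontier_le_diam {X : Type*} [PseudoMetricSpace X] {Ω : Set X} {x : X}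
    (hΩb : Bornology.IsBounded Ω) (hx : x ∈ Ω) :
    infDist x (frontier Ω) ≤ diam Ω := by
  rcases (frontier Ω).eq_empty_or_nonempty with h | ⟨y, hy⟩
  · simp [h, diam_nonneg]
  · calc infDist x (frontier Ω) ≤ dist x y := infDist_le_dist_of_mem hy
      _ ≤ diam (closure Ω) :=
        dist_le_diam_of_mem hΩb.closure (subset_closure hx) (frontier_subset_closure hy)
      _ = diam Ω := diam_closure Ω

section DistanceToBoundary

variable {E : Type*} [NormedAddCommGroup E] [NormedSpace ℝ E] {Ω : Set E} {x : E}

theorem Bornology.IsBounded.frontier_nonempty [Nontrivial E] (hΩb : Bornology.IsBounded Ω)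
    (hΩ : Ω.Nonempty) : (frontier Ω).Nonempty :=
  nonempty_frontier_iff.mpr ⟨hΩ, fun h => NormedSpace.unbounded_univ ℝ E (h ▸ hΩb)⟩

theorem infDist_frontier_pos [Nontrivial E] (hΩo : IsOpen Ω) (hΩb : Bornology.IsBounded Ω)
    (hx : x ∈ Ω) : 0 < infDist x (frontier Ω) := by
  refine (isClosed_frontier.notMem_iff_infDist_pos (hΩb.frontier_nonempty ⟨x, hx⟩)).mp ?_
  rw [hΩo.frontier_eq]
  exact fun h => h.2 hx

theorem continuousOn_infDist_frontier_rpow_s3 [Nontrivial E] (hΩo : IsOpen Ω)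
    (hΩb : Bornology.IsBounded Ω) (a : ℝ) :
    ContinuousOn (fun x => infDist x (frontier Ω) ^ a) Ω :=
  (continuous_infDist_pt _).continuousOn.rpow_const
    fun _ hx => Or.inl (infDist_frontier_pos hΩo hΩb hx).ne'

theorem aestronglyMeasurable_infDist_frontier_rpow_mul [Nontrivial E] [MeasurableSpace E]
    [OpensMeasurableSpace E] {μ : Measure E} (hΩo : IsOpen Ω) (hΩb : Bornology.IsBounded Ω)
    (a : ℝ) {f : E → ℝ} (hf : ContinuousOn f Ω) :
    AEStronglyMeasurable (fun x => infDist x (frontier Ω) ^ a * f x) (μ.restrict Ω) :=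
  ((continuousOn_infDist_frontier_rpow_s3 hΩo hΩb a).mul hf).aestronglyMeasurable hΩo.measurableSet

end DistanceToBoundary

section WeightedBounds

variable {E : Type*} [NormedAddCommGroup E] [NormedSpace ℝ E] [Nontrivial E] {Ω : Set E}
  {φ w : E → ℝ} {Cγ γ : ℝ} {x : E}

theorem norm_div_pow_le_of_weight_le (hΩo : IsOpen Ω) (hΩb : Bornology.IsBounded Ω)
    (hCγ : 0 < Cγ) (hγ : 0 ≤ γ) (hwlow : ∀ x ∈ Ω, Cγ * infDist x (frontier Ω) ^ γ ≤ w x)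
    (m : ℕ) (hx : x ∈ Ω) :
    ‖φ x / w x ^ m‖ ≤
      Cγ⁻¹ ^ m * diam Ω ^ γ * ‖infDist x (frontier Ω) ^ (-((m + 1) * γ)) * φ x‖ := by
  have hρ := infDist_frontier_pos hΩo hΩb hx
  have hw : 0 < w x :=
    (by positivity : 0 < Cγ * infDist x (frontier Ω) ^ γ).trans_le (hwlow x hx)
  rw [norm_div, norm_pow, Real.norm_of_nonneg hw.le, norm_mul,
    Real.norm_of_nonneg (Real.rpow_nonneg hρ.le _), div_eq_inv_mul]
  calc (w x ^ m)⁻¹ * ‖φ x‖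
      ≤ Cγ⁻¹ ^ m * infDist x (frontier Ω) ^ (-(m * γ)) * ‖φ x‖ := by
        gcongr; exact inv_pow_le_of_mul_rpow_le hCγ hρ (hwlow x hx) m
    _ ≤ Cγ⁻¹ ^ m * (diam Ω ^ γ * infDist x (frontier Ω) ^ (-((m + 1) * γ))) * ‖φ x‖ := by
        gcongr
        exact rpow_neg_mul_le_mul_rpow_neg_add_one_mul hρ (infDist_frontier_le_diam hΩb hx) hγ _
    _ = _ := by ring

theorem norm_fderiv_div_pow_le_of_weight_le (hΩo : IsOpen Ω) (hΩb : Bornology.IsBounded Ω)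
    (hCγ : 0 < Cγ) (hwlow : ∀ x ∈ Ω, Cγ * infDist x (frontier Ω) ^ γ ≤ w x)
    (hwd : DifferentiableOn ℝ w Ω) (hφ : DifferentiableAt ℝ φ x) (m : ℕ) (hx : x ∈ Ω) :
    ‖fderiv ℝ (fun y => φ y / w y ^ m) x‖ ≤
      Cγ⁻¹ ^ m * ‖infDist x (frontier Ω) ^ (-(m * γ)) * ‖fderiv ℝ φ x‖‖ +
        m * Cγ⁻¹ ^ (m + 1) *
          (‖infDist x (frontier Ω) ^ (-((m + 1) * γ)) * φ x‖ * ‖fderiv ℝ w x‖) := by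
  have hρ := infDist_frontier_pos hΩo hΩb hx
  have hw : 0 < w x :=
    (by positivity : 0 < Cγ * infDist x (frontier Ω) ^ γ).trans_le (hwlow x hx)
  have hinv := inv_pow_le_of_mul_rpow_le hCγ hρ (hwlow x hx)
  refine (norm_fderiv_div_pow_le hφ (hwd.differentiableAt (hΩo.mem_nhds hx)) hw m).trans ?_
  rw [norm_mul, norm_mul, norm_norm, Real.norm_of_nonneg (Real.rpow_nonneg hρ.le _),
    Real.norm_of_nonneg (Real.rpow_nonneg hρ.le _)]
  calc (w x ^ m)⁻¹ * ‖fderiv ℝ φ x‖ + m * (w x ^ (m + 1))⁻¹ * (‖φ x‖ * ‖fderiv ℝ w x‖)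
      ≤ Cγ⁻¹ ^ m * infDist x (frontier Ω) ^ (-(m * γ)) * ‖fderiv ℝ φ x‖ +
          m * (Cγ⁻¹ ^ (m + 1) * infDist x (frontier Ω) ^ (-((m + 1 : ℕ) * γ))) *
            (‖φ x‖ * ‖fderiv ℝ w x‖) := by
        gcongr
        exacts [hinv m, hinv (m + 1)]
    _ = _ := by push_cast; ring

end WeightedBounds

/-- `r ≠ ⊤` excludes the truncated case `p⁻¹ ≤ q⁻¹` of the subtraction. -/
theorem ENNReal.inv_add_inv_eq_of_inv_eq_tsub {p q r : ℝ≥0∞} (h : r⁻¹ = p⁻¹ - q⁻¹)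
    (hr : r ≠ ⊤) : r⁻¹ + q⁻¹ = p⁻¹ := by
  have hlt : q⁻¹ < p⁻¹ := by
    rw [← tsub_pos_iff_lt, ← h]
    exact ENNReal.inv_pos.mpr hr
  rw [h, tsub_add_cancel_of_le hlt.le]

theorem ENNReal.exists_pos_le_ofReal {a : ℝ≥0∞} (ha : a ≠ ⊤) :
    ∃ C : ℝ, 0 < C ∧ a ≤ ENNReal.ofReal C :=
  ⟨a.toReal + 1, by positivity, by
    rw [ENNReal.ofReal_add toReal_nonneg zero_le_one, ofReal_toReal ha]; exact le_self_add⟩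

section LpBounds

variable {α F G U H : Type*} [MeasurableSpace α] {μ : Measure α} [NormedAddCommGroup F]
  [NormedAddCommGroup G] [NormedAddCommGroup U] [NormedAddCommGroup H]

theorem eLpNorm_le_mul_measure_rpow_mul_eLpNorm {f : α → F} {g : α → G} {c : ℝ}
    {p q : ℝ≥0∞} (hpq : p ≤ q) (hg : AEStronglyMeasurable g μ)
    (hfg : ∀ᵐ x ∂μ, ‖f x‖ ≤ c * ‖g x‖) :
    eLpNorm f p μ ≤
      ENNReal.ofReal c * μ Set.univ ^ (1 / p.toReal - 1 / q.toReal) * eLpNorm g q μ :=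
  calc eLpNorm f p μ ≤ ENNReal.ofReal c * eLpNorm g p μ :=
        eLpNorm_le_mul_eLpNorm_of_ae_le_mul hfg p
    _ ≤ ENNReal.ofReal c * (eLpNorm g q μ * μ Set.univ ^ (1 / p.toReal - 1 / q.toReal)) := by
        gcongr; exact eLpNorm_le_eLpNorm_mul_rpow_measure_univ hpq hg
    _ = _ := by ring

theorem eLpNorm_le_add_mul_eLpNorm_mul {f : α → F} {u : α → U} {g : α → G} {h : α → H}
    {a b : ℝ} {p q r : ℝ≥0∞} [HolderTriple q r p] (hp : 1 ≤ p) (ha : 0 ≤ a) (hb : 0 ≤ b)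
    (hu : AEStronglyMeasurable u μ) (hg : AEStronglyMeasurable g μ)
    (hh : AEStronglyMeasurable h μ)
    (hf : ∀ᵐ x ∂μ, ‖f x‖ ≤ a * ‖u x‖ + b * (‖g x‖ * ‖h x‖)) :
    eLpNorm f p μ ≤
      ENNReal.ofReal a * eLpNorm u p μ + ENNReal.ofReal b * (eLpNorm g q μ * eLpNorm h r μ) := by
  have hHolder : eLpNorm (fun x => ‖g x‖ * ‖h x‖) p μ ≤ eLpNorm g q μ * eLpNorm h r μ := by
    simpa using eLpNorm_le_eLpNorm_mul_eLpNorm'_of_norm hg hh (fun s t => ‖s‖ * ‖t‖) 1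
      (.of_forall fun x => by simp)
  calc eLpNorm f p μ
      ≤ eLpNorm ((a • fun x => ‖u x‖) + b • fun x => ‖g x‖ * ‖h x‖) p μ := by
        refine eLpNorm_mono_ae_real (hf.mono fun x hx => ?_)
        simpa using hx
    _ ≤ eLpNorm (a • fun x => ‖u x‖) p μ + eLpNorm (b • fun x => ‖g x‖ * ‖h x‖) p μ :=
        eLpNorm_add_le (hu.norm.const_smul a) ((hg.norm.mul hh.norm).const_smul b) hp
    _ ≤ _ := by
        rw [eLpNorm_const_smul, eLpNorm_const_smul, eLpNorm_norm, Real.enorm_eq_ofReal ha,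
          Real.enorm_eq_ofReal hb]
        exact add_le_add_right (mul_le_mul_right hHolder _) _

end LpBounds

section Embedding

variable {E : Type*} [NormedAddCommGroup E] [NormedSpace ℝ E] [Nontrivial E]
  [MeasurableSpace E] [OpensMeasurableSpace E] {μ : Measure E} {Ω : Set E} {φ w : E → ℝ} {Cγ γ : ℝ}

theorem eLpNorm_div_pow_add_eLpNorm_fderiv_div_pow_le {θ ϑ p : ℝ≥0∞} [HolderTriple ϑ p θ]
    (hθ : 1 ≤ θ) (hΩo : IsOpen Ω) (hΩb : Bornology.IsBounded Ω) (hCγ : 0 < Cγ) (hγ : 0 ≤ γ)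
    (hwlow : ∀ x ∈ Ω, Cγ * infDist x (frontier Ω) ^ γ ≤ w x) (hwd : DifferentiableOn ℝ w Ω)
    (hφ : ContDiff ℝ 1 φ) (m : ℕ) :
    eLpNorm (fun x => φ x / w x ^ m) θ (μ.restrict Ω) +
        eLpNorm (fun x => ‖fderiv ℝ (fun y => φ y / w y ^ m) x‖) θ (μ.restrict Ω) ≤
      (ENNReal.ofReal (Cγ⁻¹ ^ m * diam Ω ^ γ) * μ Ω ^ (1 / θ.toReal - 1 / ϑ.toReal) +
          ENNReal.ofReal (m * Cγ⁻¹ ^ (m + 1)) *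
            eLpNorm (fun x => ‖fderiv ℝ w x‖) p (μ.restrict Ω) +
          ENNReal.ofReal (Cγ⁻¹ ^ m)) *
        (eLpNorm (fun x => infDist x (frontier Ω) ^ (-((m + 1) * γ)) * φ x) ϑ (μ.restrict Ω) +
          eLpNorm (fun x => infDist x (frontier Ω) ^ (-(m * γ)) * ‖fderiv ℝ φ x‖) θ
            (μ.restrict Ω)) := by
  have h₀ := eLpNorm_le_mul_measure_rpow_mul_eLpNorm (μ := μ.restrict Ω)
    (HolderTriple.le ϑ p θ)
    (aestronglyMeasurable_infDist_frontier_rpow_mul hΩo hΩb _ hφ.continuous.continuousOn)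
    (ae_restrict_of_forall_mem hΩo.measurableSet fun x hx =>
      norm_div_pow_le_of_weight_le (φ := φ) hΩo hΩb hCγ hγ hwlow m hx)
  have h₁ := eLpNorm_le_add_mul_eLpNorm_mul (μ := μ.restrict Ω) (q := ϑ) (r := p)
    (f := fderiv ℝ (fun y => φ y / w y ^ m)) (a := Cγ⁻¹ ^ m) (b := m * Cγ⁻¹ ^ (m + 1)) hθ
    (by positivity) (by positivity)
    (aestronglyMeasurable_infDist_frontier_rpow_mul hΩo hΩb _
      (hφ.continuous_fderiv one_ne_zero).norm.continuousOn)
    (aestronglyMeasurable_infDist_frontier_rpow_mul hΩo hΩb _ hφ.continuous.continuousOn)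
    (measurable_fderiv ℝ w).norm.aestronglyMeasurable
    (ae_restrict_of_forall_mem hΩo.measurableSet fun x hx => by
      simpa only [norm_norm] using norm_fderiv_div_pow_le_of_weight_le hΩo hΩb hCγ hwlow hwd
        (hφ.differentiable one_ne_zero x) m hx)
  rw [Measure.restrict_apply_univ] at h₀
  rw [eLpNorm_norm]
  set R₁ := eLpNorm (fun x => infDist x (frontier Ω) ^ (-((m + 1) * γ)) * φ x) ϑ (μ.restrict Ω)
  set R₂ :=
    eLpNorm (fun x => infDist x (frontier Ω) ^ (-(m * γ)) * ‖fderiv ℝ φ x‖) θ (μ.restrict Ω)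
  set G := eLpNorm (fun x => ‖fderiv ℝ w x‖) p (μ.restrict Ω)
  set a := ENNReal.ofReal (Cγ⁻¹ ^ m * diam Ω ^ γ) * μ Ω ^ (1 / θ.toReal - 1 / ϑ.toReal)
  set c := ENNReal.ofReal (Cγ⁻¹ ^ m)
  set d := ENNReal.ofReal (m * Cγ⁻¹ ^ (m + 1))
  calc _ ≤ a * R₁ + (c * R₂ + d * (R₁ * G)) := add_le_add h₀ h₁
    _ = (a + d * G) * R₁ + c * R₂ := by ring
    _ ≤ (a + d * G + c) * R₁ + (a + d * G + c) * R₂ := by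
        gcongr ?_ * _ + ?_ * _
        exacts [le_self_add, le_add_self]
    _ = (a + d * G + c) * (R₁ + R₂) := (mul_add _ _ _).symm

end Embedding

theorem stmt_3_general (n : ℕ) (hn : 1 ≤ n) (Ω : Set (EuclideanSpace ℝ (Fin n)))
    (hΩo : IsOpen Ω) (hΩb : Bornology.IsBounded Ω)
    (m : ℕ) (θ pbar ϑ : ℝ≥0∞)
    (hθ1 : 1 < θ)
    (hϑ : ϑ⁻¹ = θ⁻¹ - pbar⁻¹) (hϑ2 : ϑ < ⊤)
    (γ Cγ : ℝ) (hγ : 0 < γ) (hCγ : 0 < Cγ)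
    (w : EuclideanSpace ℝ (Fin n) → ℝ)
    (hwd : DifferentiableOn ℝ w Ω)
    (hwlow : ∀ x ∈ Ω, Cγ * infDist x (frontier Ω) ^ γ ≤ w x)
    (hgrad : eLpNorm (fun x => ‖fderiv ℝ w x‖) pbar (volume.restrict Ω) < ⊤) :
    ∃ C : ℝ, 0 < C ∧
      ∀ φ : EuclideanSpace ℝ (Fin n) → ℝ, ContDiff ℝ (⊤ : ℕ∞) φ →
        HasCompactSupport φ → tsupport φ ⊆ Ω →
        eLpNorm (fun x => φ x / w x ^ m) θ (volume.restrict Ω) +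
            eLpNorm (fun x => ‖fderiv ℝ (fun y => φ y / w y ^ m) x‖) θ
              (volume.restrict Ω) ≤
          ENNReal.ofReal C *
            (eLpNorm
                (fun x => infDist x (frontier Ω) ^ (-(((m : ℝ) + 1) * γ)) * φ x) ϑ
                (volume.restrict Ω) +
              eLpNorm
                (fun x => infDist x (frontier Ω) ^ (-((m : ℝ) * γ)) * ‖fderiv ℝ φ x‖) θ
                (volume.restrict Ω)) := by
  have : Nonempty (Fin n) := ⟨⟨0, hn⟩⟩
  have : HolderTriple ϑ pbar θ := ⟨ENNReal.inv_add_inv_eq_of_inv_eq_tsub hϑ hϑ2.ne⟩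
  have hθϑ : θ ≤ ϑ := HolderTriple.le ϑ pbar θ
  have hexp : 0 ≤ 1 / θ.toReal - 1 / ϑ.toReal := sub_nonneg.mpr <| one_div_le_one_div_of_le
    (toReal_pos (zero_lt_one.trans hθ1).ne' (hθϑ.trans_lt hϑ2).ne) (toReal_mono hϑ2.ne hθϑ)
  have hM : volume Ω ^ (1 / θ.toReal - 1 / ϑ.toReal) ≠ ⊤ :=
    rpow_ne_top_of_nonneg hexp hΩb.measure_lt_top.ne
  obtain ⟨C, hC, hCle⟩ := ENNReal.exists_pos_le_ofReal (a :=
    ENNReal.ofReal (Cγ⁻¹ ^ m * diam Ω ^ γ) * volume Ω ^ (1 / θ.toReal - 1 / ϑ.toReal) +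
      ENNReal.ofReal (m * Cγ⁻¹ ^ (m + 1)) *
        eLpNorm (fun x => ‖fderiv ℝ w x‖) pbar (volume.restrict Ω) +
      ENNReal.ofReal (Cγ⁻¹ ^ m)) (by finiteness)
  exact ⟨C, hC, fun φ hφ _ _ =>
    (eLpNorm_div_pow_add_eLpNorm_fderiv_div_pow_le (μ := volume) (ϑ := ϑ) (p := pbar)
      hθ1.le hΩo hΩb hCγ hγ.le hwlow hwd (hφ.of_le (by simp)) m).trans
      (mul_le_mul_left hCle _)⟩

/-- Embedding inequality for weighted Sobolev spaces with singular distance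
weights: for a weight `w` continuous on `closure Ω`, differentiable on `Ω`,
bounded below by `C_γ ρ^γ`, with gradient in `L^p̄(Ω)`, the `W^{1,θ}`-norm of
`w^{-m} φ` is controlled by weighted norms of `φ` and `∇φ`, uniformly over all
test functions `φ ∈ C_c^∞(Ω)`. -/
theorem stmt_3 (n : ℕ) (hn : 1 ≤ n) (Ω : Set (EuclideanSpace ℝ (Fin n)))
    (hΩo : IsOpen Ω) (hΩne : Ω.Nonempty) (hΩb : Bornology.IsBounded Ω)
    (m : ℕ) (hm : 1 ≤ m) (θ pbar ϑ : ℝ≥0∞)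
    (hθ1 : 1 < θ) (hθ2 : θ ≤ 2) (hpbar : 2 < pbar)
    (hϑ : ϑ⁻¹ = θ⁻¹ - pbar⁻¹) (hϑ1 : 1 < ϑ) (hϑ2 : ϑ < ⊤)
    (γ Cγ : ℝ) (hγ : 0 < γ) (hCγ : 0 < Cγ)
    (w : EuclideanSpace ℝ (Fin n) → ℝ)
    (hwc : ContinuousOn w (closure Ω)) (hwd : DifferentiableOn ℝ w Ω)
    (hwlow : ∀ x ∈ Ω, Cγ * infDist x (frontier Ω) ^ γ ≤ w x)
    (hgrad : eLpNorm (fun x => ‖fderiv ℝ w x‖) pbar (volume.restrict Ω) < ⊤) :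
    ∃ C : ℝ, 0 < C ∧
      ∀ φ : EuclideanSpace ℝ (Fin n) → ℝ, ContDiff ℝ (⊤ : ℕ∞) φ →
        HasCompactSupport φ → tsupport φ ⊆ Ω →
        eLpNorm (fun x => φ x / w x ^ m) θ (volume.restrict Ω) +
            eLpNorm (fun x => ‖fderiv ℝ (fun y => φ y / w y ^ m) x‖) θ
              (volume.restrict Ω) ≤
          ENNReal.ofReal C *
            (eLpNorm
                (fun x => infDist x (frontier Ω) ^ (-(((m : ℝ) + 1) * γ)) * φ x) ϑ
                (volume.restrict Ω) +
              eLpNorm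
                (fun x => infDist x (frontier Ω) ^ (-((m : ℝ) * γ)) * ‖fderiv ℝ φ x‖) θ
                (volume.restrict Ω)) :=
  stmt_3_general n hn Ω hΩo hΩb m θ pbar ϑ hθ1 hϑ hϑ2 γ Cγ hγ hCγ w hwd hwlow hgrad
end

section
/- Let n ≥ 1, let Ω ⊂ ℝⁿ be a nonempty bounded open set, and let m be an odd natural number. Let σ : Ω → ℝ^{n×n} be measurable with |σ_{ij}(x)| ≤ Λ for a.e. x ∈ Ω and all i,j, let f ∈ L¹(Ω), let q, q† : Ω → ℝ be measurable with 0 ≤ q(x) ≤ q̄ a.e. and q† bounded, and let p ∈ [2,∞) with conjugate exponent p' = p/(p−1). Let u, u† : ℝⁿ → ℝ be continuously differentiable with sup_Ω |u| ≤ C_A and sup_Ω |u†| ≤ C_A and with gradients bounded on Ω, and assume the weak formulations ∫_Ω σ∇u·∇v dx + ∫_Ω q u^m v dx = ∫_Ω f v dx and ∫_Ω σ∇u†·∇v dx + ∫_Ω q† (u†)^m v dx = ∫_Ω f v dx hold for every continuously differentiable v with compact support contained in Ω. Then for every such v: |∫_Ω (q† − q)(u†)^m v dx| ≤ (nΛ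 + m q̄ C_A^{m−1}) · ( ‖u−u†‖_{L^p(Ω)} + ‖∇(u−u†)‖_{L^p(Ω)} ) · ( ‖v‖_{L^{p'}(Ω)} + ‖∇v‖_{L^{p'}(Ω)} ). -/
open MeasureTheory Finset

/-!
Subtracting the two weak formulations, tested against the same `v`, gives
`∫ (q† - q) (u†)^m v = ∫ σ∇(u - u†)·∇v + ∫ q (u^m - (u†)^m) v`.
Pointwise, the first integrand is at most `nΛ |∇(u - u†)| |∇v|` (entrywise bound on `σ` and
`‖·‖₁ ≤ √n ‖·‖₂`), the second at most `m q̄ C_A^{m-1} |u - u†| |v|` (factor `a^m - b^m`);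
Hölder's inequality then bounds each term by the product of the `Lᵖ` and `Lᵖ'` norms.
-/

theorem abs_integral_le_mul_Lp_mul_Lq {α E : Type*} [MeasurableSpace α] {μ : Measure α}
    [NormedAddCommGroup E] {f : α → ℝ} {g h : α → E} {p q c : ℝ} (hpq : p.HolderConjugate q)
    (hc : 0 ≤ c) (hg : MemLp g (ENNReal.ofReal p) μ)
    (hh : MemLp h (ENNReal.ofReal q) μ) (hf : ∀ᵐ x ∂μ, |f x| ≤ c * (‖g x‖ * ‖h x‖)) :
    |∫ x, f x ∂μ| ≤ c * ((∫ x, ‖g x‖ ^ p ∂μ) ^ (1 / p) * (∫ x, ‖h x‖ ^ q ∂μ) ^ (1 / q)) := by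
  have := hpq.ennrealOfReal
  have hgh : Integrable (fun x => ‖g x‖ * ‖h x‖) μ := hg.norm.integrable_mul hh.norm
  calc |∫ x, f x ∂μ| ≤ ∫ x, |f x| ∂μ := abs_integral_le_integral_abs
    _ ≤ ∫ x, c * (‖g x‖ * ‖h x‖) ∂μ :=
        integral_mono_of_nonneg (.of_forall fun _ => abs_nonneg _) (hgh.const_mul c) hf
    _ = c * ∫ x, ‖g x‖ * ‖h x‖ ∂μ := integral_const_mul _ _
    _ ≤ _ := by gcongr; exact integral_mul_norm_le_Lp_mul_Lq hpq hg hh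

theorem memLp_restrict_sub_of_norm_le {X E : Type*} [MeasurableSpace X] {μ : Measure X}
    [NormedAddCommGroup E] {F G : X → E} {s : Set X} [IsFiniteMeasure (μ.restrict s)] {C : ℝ}
    {p : ENNReal} (hs : MeasurableSet s) (hF : AEStronglyMeasurable F (μ.restrict s))
    (hG : AEStronglyMeasurable G (μ.restrict s)) (hFC : ∀ x ∈ s, ‖F x‖ ≤ C)
    (hGC : ∀ x ∈ s, ‖G x‖ ≤ C) :
    MemLp (fun x => F x - G x) p (μ.restrict s) :=
  .of_bound (hF.sub hG) (2 * C) <| ae_restrict_of_forall_mem hs fun x hx =>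
    (norm_sub_le _ _).trans (by linarith [hFC x hx, hGC x hx])

theorem integrableOn_bdd_mul_mul {X : Type*} [TopologicalSpace X] [MeasurableSpace X]
    [OpensMeasurableSpace X] {μ : Measure X} [IsFiniteMeasureOnCompacts μ] {Q g v : X → ℝ}
    {s : Set X} {C : ℝ} (hQ : AEStronglyMeasurable Q (μ.restrict s))
    (hQC : ∀ᵐ x ∂(μ.restrict s), |Q x| ≤ C) (hg : Continuous g) (hv : Continuous v)
    (hvc : HasCompactSupport v) :
    IntegrableOn (fun x => Q x * g x * v x) s μ := by
  simp_rw [mul_assoc]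
  exact ((hg.mul hv).integrable_of_hasCompactSupport hvc.mul_left).integrableOn.bdd_mul hQ hQC

theorem abs_mul_pow_sub_pow_mul_le {q qbar a b C v : ℝ} (m : ℕ) (hq : |q| ≤ qbar)
    (ha : |a| ≤ C) (hb : |b| ≤ C) :
    |q * (a ^ m - b ^ m) * v| ≤ m * qbar * C ^ (m - 1) * (‖a - b‖ * ‖v‖) := by
  have hpow : |a ^ m - b ^ m| ≤ |a - b| * m * C ^ (m - 1) :=
    (abs_pow_sub_pow_le a b m).trans (by gcongr; exact max_le ha hb)
  have hqbar : 0 ≤ qbar := (abs_nonneg q).trans hq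
  rw [abs_mul, abs_mul, Real.norm_eq_abs, Real.norm_eq_abs]
  calc |q| * |a ^ m - b ^ m| * |v| ≤ qbar * (|a - b| * m * C ^ (m - 1)) * |v| := by gcongr
    _ = _ := by ring

theorem abs_integral_mul_pow_sub_pow_mul_le {X : Type*} [TopologicalSpace X] [MeasurableSpace X]
    [OpensMeasurableSpace X] {μ : Measure X} [IsFiniteMeasureOnCompacts μ] {Ω : Set X}
    [IsFiniteMeasure (μ.restrict Ω)] {q u udag v : X → ℝ} {qbar C p p' : ℝ} (m : ℕ)
    (hΩ : MeasurableSet Ω) (hpq : p.HolderConjugate p') (hqbar : 0 ≤ qbar) (hC : 0 ≤ C)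
    (hq : ∀ᵐ x ∂(μ.restrict Ω), |q x| ≤ qbar) (hu : Continuous u) (hudag : Continuous udag)
    (huC : ∀ x ∈ Ω, |u x| ≤ C) (hudagC : ∀ x ∈ Ω, |udag x| ≤ C) (hv : Continuous v)
    (hvc : HasCompactSupport v) :
    |∫ x in Ω, q x * (u x ^ m - udag x ^ m) * v x ∂μ| ≤
      m * qbar * C ^ (m - 1) * ((∫ x in Ω, |u x - udag x| ^ p ∂μ) ^ (1 / p) *
        (∫ x in Ω, |v x| ^ p' ∂μ) ^ (1 / p')) := by
  simpa only [Real.norm_eq_abs] using abs_integral_le_mul_Lp_mul_Lq hpq (by positivity)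
    (memLp_restrict_sub_of_norm_le hΩ hu.aestronglyMeasurable hudag.aestronglyMeasurable huC
      hudagC)
    ((hv.memLp_of_hasCompactSupport hvc).restrict Ω)
    ((hq.and (ae_restrict_mem hΩ)).mono fun x hx =>
      abs_mul_pow_sub_pow_mul_le m hx.1 (huC x hx.2) (hudagC x hx.2))

theorem EuclideanSpace.sum_abs_le_sqrt_card_mul_norm {ι : Type*} [Fintype ι]
    (w : EuclideanSpace ℝ ι) : ∑ j, |w j| ≤ √(Fintype.card ι) * ‖w‖ := by
  simpa [EuclideanSpace.norm_eq] using
    Real.sum_mul_le_sqrt_mul_sqrt univ (fun _ => (1 : ℝ)) (fun j => |w j|)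

section MatrixPairing

variable {ι : Type*} [Fintype ι] [DecidableEq ι]

theorem sum_abs_apply_single_le (L : EuclideanSpace ℝ ι →L[ℝ] ℝ) :
    ∑ j, |L (EuclideanSpace.single j 1)| ≤ √(Fintype.card ι) * ‖L‖ := by
  set w := (InnerProductSpace.toDual ℝ _).symm L
  have hw : ∀ j, L (EuclideanSpace.single j 1) = w j := fun j => by
    rw [← InnerProductSpace.toDual_symm_apply, EuclideanSpace.inner_single_right]
    simp [w]
  simpa [hw, w] using w.sum_abs_le_sqrt_card_mul_norm

/-- `A ∇u · ∇v` at a point, with `L = Du(x)` and `K = Dv(x)`. -/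
noncomputable def matrixPairing (A : Matrix ι ι ℝ) (L K : EuclideanSpace ℝ ι →L[ℝ] ℝ) : ℝ :=
  ∑ i, ∑ j, A i j * L (EuclideanSpace.single j 1) * K (EuclideanSpace.single i 1)

theorem matrixPairing_sub_left (A : Matrix ι ι ℝ) (L L' K : EuclideanSpace ℝ ι →L[ℝ] ℝ) :
    matrixPairing A (L - L') K = matrixPairing A L K - matrixPairing A L' K := by
  simp only [matrixPairing, ← sum_sub_distrib, sub_apply, mul_sub, sub_mul]

theorem abs_matrixPairing_le {A : Matrix ι ι ℝ} {Λ : ℝ} (hΛ : 0 ≤ Λ) (hA : ∀ i j, |A i j| ≤ Λ)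
    (L K : EuclideanSpace ℝ ι →L[ℝ] ℝ) :
    |matrixPairing A L K| ≤ Fintype.card ι * Λ * (‖L‖ * ‖K‖) := by
  calc |matrixPairing A L K|
      ≤ ∑ i, ∑ j, |A i j * L (EuclideanSpace.single j 1) * K (EuclideanSpace.single i 1)| :=
        (abs_sum_le_sum_abs _ _).trans (sum_le_sum fun i _ => abs_sum_le_sum_abs _ _)
    _ ≤ ∑ i, ∑ j, Λ * |L (EuclideanSpace.single j 1)| * |K (EuclideanSpace.single i 1)| := by
        simp only [abs_mul]
        gcongr with i _ j _
        exact hA i j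
    _ = Λ * (∑ j, |L (EuclideanSpace.single j 1)|) * ∑ i, |K (EuclideanSpace.single i 1)| := by
        simp only [mul_sum, sum_mul]
    _ ≤ Λ * (√(Fintype.card ι) * ‖L‖) * (√(Fintype.card ι) * ‖K‖) := by
        gcongr
        exacts [sum_abs_apply_single_le L, sum_abs_apply_single_le K]
    _ = Fintype.card ι * Λ * (‖L‖ * ‖K‖) := by
        linear_combination Λ * ‖L‖ * ‖K‖ * Real.mul_self_sqrt (Nat.cast_nonneg (Fintype.card ι))

theorem integrableOn_matrixPairing {μ : Measure (EuclideanSpace ℝ ι)}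
    [IsFiniteMeasureOnCompacts μ] {σ : EuclideanSpace ℝ ι → Matrix ι ι ℝ}
    {Ω : Set (EuclideanSpace ℝ ι)} {Λ : ℝ} {u v : EuclideanSpace ℝ ι → ℝ}
    (hσ : ∀ i j, Measurable fun x => σ x i j) (hΛ : 0 ≤ Λ)
    (hσΛ : ∀ᵐ x ∂(μ.restrict Ω), ∀ i j, |σ x i j| ≤ Λ)
    (hu : ContDiff ℝ 1 u) (hv : ContDiff ℝ 1 v) (hvc : HasCompactSupport v) :
    IntegrableOn (fun x => matrixPairing (σ x) (fderiv ℝ u x) (fderiv ℝ v x)) Ω μ := by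
  have hDuDv : Integrable (fun x => ‖fderiv ℝ u x‖ * ‖fderiv ℝ v x‖) μ :=
    ((hu.continuous_fderiv one_ne_zero).norm.mul (hv.continuous_fderiv one_ne_zero).norm)
      |>.integrable_of_hasCompactSupport (hvc.fderiv ℝ).norm.mul_left
  refine (hDuDv.const_mul (Fintype.card ι * Λ)).integrableOn.mono' ?_ ?_
  · refine Measurable.aestronglyMeasurable ?_
    unfold matrixPairing
    refine Finset.measurable_sum _ fun i _ => Finset.measurable_sum _ fun j _ => ?_
    exact ((hσ i j).mul (measurable_fderiv_apply_const ℝ u _)).mul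
      (measurable_fderiv_apply_const ℝ v _)
  · filter_upwards [hσΛ] with x hx
    exact abs_matrixPairing_le hΛ hx _ _

theorem abs_integral_matrixPairing_sub_le {μ : Measure (EuclideanSpace ℝ ι)}
    [IsFiniteMeasureOnCompacts μ] {Ω : Set (EuclideanSpace ℝ ι)} [IsFiniteMeasure (μ.restrict Ω)]
    {σ : EuclideanSpace ℝ ι → Matrix ι ι ℝ} {u udag v : EuclideanSpace ℝ ι → ℝ} {Λ M p q : ℝ}
    (hΩ : MeasurableSet Ω) (hpq : p.HolderConjugate q) (hΛ : 0 ≤ Λ)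
    (hσΛ : ∀ᵐ x ∂(μ.restrict Ω), ∀ i j, |σ x i j| ≤ Λ)
    (hu : ContDiff ℝ 1 u) (hudag : ContDiff ℝ 1 udag) (huM : ∀ x ∈ Ω, ‖fderiv ℝ u x‖ ≤ M)
    (hudagM : ∀ x ∈ Ω, ‖fderiv ℝ udag x‖ ≤ M) (hv : ContDiff ℝ 1 v) (hvc : HasCompactSupport v) :
    |∫ x in Ω, matrixPairing (σ x) (fderiv ℝ u x - fderiv ℝ udag x) (fderiv ℝ v x) ∂μ| ≤
      Fintype.card ι * Λ * ((∫ x in Ω, ‖fderiv ℝ u x - fderiv ℝ udag x‖ ^ p ∂μ) ^ (1 / p) *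
        (∫ x in Ω, ‖fderiv ℝ v x‖ ^ q ∂μ) ^ (1 / q)) :=
  abs_integral_le_mul_Lp_mul_Lq hpq (by positivity)
    (memLp_restrict_sub_of_norm_le hΩ (hu.continuous_fderiv one_ne_zero).aestronglyMeasurable
      (hudag.continuous_fderiv one_ne_zero).aestronglyMeasurable huM hudagM)
    (((hv.continuous_fderiv one_ne_zero).memLp_of_hasCompactSupport (hvc.fderiv ℝ)).restrict Ω)
    (hσΛ.mono fun x hx => abs_matrixPairing_le hΛ hx _ _)

theorem integral_sub_mul_pow_mul_eq_of_weak {μ : Measure (EuclideanSpace ℝ ι)}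
    {Ω : Set (EuclideanSpace ℝ ι)} {σ : EuclideanSpace ℝ ι → Matrix ι ι ℝ}
    {q qdag u udag v : EuclideanSpace ℝ ι → ℝ} {m : ℕ} {c : ℝ}
    (hAu : IntegrableOn (fun x => matrixPairing (σ x) (fderiv ℝ u x) (fderiv ℝ v x)) Ω μ)
    (hAudag : IntegrableOn (fun x => matrixPairing (σ x) (fderiv ℝ udag x) (fderiv ℝ v x)) Ω μ)
    (hQu : IntegrableOn (fun x => q x * u x ^ m * v x) Ω μ)
    (hQudag : IntegrableOn (fun x => q x * udag x ^ m * v x) Ω μ)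
    (hQdagudag : IntegrableOn (fun x => qdag x * udag x ^ m * v x) Ω μ)
    (hweak : (∫ x in Ω, matrixPairing (σ x) (fderiv ℝ u x) (fderiv ℝ v x) ∂μ) +
      ∫ x in Ω, q x * u x ^ m * v x ∂μ = c)
    (hweakdag : (∫ x in Ω, matrixPairing (σ x) (fderiv ℝ udag x) (fderiv ℝ v x) ∂μ) +
      ∫ x in Ω, qdag x * udag x ^ m * v x ∂μ = c) :
    ∫ x in Ω, (qdag x - q x) * udag x ^ m * v x ∂μ =
      (∫ x in Ω, matrixPairing (σ x) (fderiv ℝ u x - fderiv ℝ udag x) (fderiv ℝ v x) ∂μ) +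
        ∫ x in Ω, q x * (u x ^ m - udag x ^ m) * v x ∂μ := by
  simp_rw [matrixPairing_sub_left, mul_sub, sub_mul]
  rw [integral_sub hQdagudag hQudag, integral_sub hAu hAudag, integral_sub hQu hQudag]
  linarith

end MatrixPairing

theorem stmt_8_general (n : ℕ) (hn : 1 ≤ n) (Ω : Set (EuclideanSpace ℝ (Fin n)))
    (hΩo : IsOpen Ω) (hΩne : Ω.Nonempty) (hΩb : Bornology.IsBounded Ω)
    (m : ℕ)
    (σ : EuclideanSpace ℝ (Fin n) → Matrix (Fin n) (Fin n) ℝ)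
    (hσmeas : ∀ i j, Measurable fun x => σ x i j)
    (Λ : ℝ) (hσbd : ∀ᵐ x ∂(volume.restrict Ω), ∀ i j, |σ x i j| ≤ Λ)
    (f : EuclideanSpace ℝ (Fin n) → ℝ)
    (q qdag : EuclideanSpace ℝ (Fin n) → ℝ)
    (hqmeas : Measurable q) (hqdagmeas : Measurable qdag)
    (qbar : ℝ) (hq : ∀ᵐ x ∂(volume.restrict Ω), 0 ≤ q x ∧ q x ≤ qbar)
    (Mdag : ℝ) (hqdagbd : ∀ x ∈ Ω, |qdag x| ≤ Mdag)
    (p p' : ℝ) (hp : 2 ≤ p) (hp' : p' = p / (p - 1))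
    (u udag : EuclideanSpace ℝ (Fin n) → ℝ)
    (hu : ContDiff ℝ 1 u) (hudag : ContDiff ℝ 1 udag)
    (CA : ℝ) (hub : ∀ x ∈ Ω, |u x| ≤ CA) (hudagb : ∀ x ∈ Ω, |udag x| ≤ CA)
    (Mg : ℝ) (hgb : ∀ x ∈ Ω, ‖fderiv ℝ u x‖ ≤ Mg)
    (hgdagb : ∀ x ∈ Ω, ‖fderiv ℝ udag x‖ ≤ Mg)
    (hweak : ∀ v : EuclideanSpace ℝ (Fin n) → ℝ, ContDiff ℝ 1 v →
      HasCompactSupport v → tsupport v ⊆ Ω →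
      (∫ x in Ω, ∑ i, ∑ j, σ x i j * fderiv ℝ u x (EuclideanSpace.single j 1) *
          fderiv ℝ v x (EuclideanSpace.single i 1)) +
        ∫ x in Ω, q x * u x ^ m * v x = ∫ x in Ω, f x * v x)
    (hweakdag : ∀ v : EuclideanSpace ℝ (Fin n) → ℝ, ContDiff ℝ 1 v →
      HasCompactSupport v → tsupport v ⊆ Ω →
      (∫ x in Ω, ∑ i, ∑ j, σ x i j * fderiv ℝ udag x (EuclideanSpace.single j 1) *
          fderiv ℝ v x (EuclideanSpace.single i 1)) +
        ∫ x in Ω, qdag x * udag x ^ m * v x = ∫ x in Ω, f x * v x) :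
    ∀ v : EuclideanSpace ℝ (Fin n) → ℝ, ContDiff ℝ 1 v →
      HasCompactSupport v → tsupport v ⊆ Ω →
      |∫ x in Ω, (qdag x - q x) * udag x ^ m * v x| ≤
        ((n : ℝ) * Λ + (m : ℝ) * qbar * CA ^ (m - 1)) *
          ((∫ x in Ω, |u x - udag x| ^ p) ^ (1 / p) +
            (∫ x in Ω, ‖fderiv ℝ u x - fderiv ℝ udag x‖ ^ p) ^ (1 / p)) *
          ((∫ x in Ω, |v x| ^ p') ^ (1 / p') +
            (∫ x in Ω, ‖fderiv ℝ v x‖ ^ p') ^ (1 / p')) := by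
  intro v hv hvc hvs
  have hΩm := hΩo.measurableSet
  have : IsFiniteMeasure (volume.restrict Ω) :=
    isFiniteMeasure_restrict.mpr hΩb.measure_lt_top.ne
  have : (ae (volume.restrict Ω)).NeBot := ae_restrict_neBot.mpr (hΩo.measure_ne_zero _ hΩne)
  obtain ⟨x₀, hσx₀, hqx₀, hx₀⟩ := (hσbd.and (hq.and (ae_restrict_mem hΩm))).exists
  have hΛ : 0 ≤ Λ := (abs_nonneg _).trans (hσx₀ ⟨0, hn⟩ ⟨0, hn⟩)
  have hqbar : 0 ≤ qbar := hqx₀.1.trans hqx₀.2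
  have hCA : 0 ≤ CA := (abs_nonneg _).trans (hub x₀ hx₀)
  have hqb : ∀ᵐ x ∂(volume.restrict Ω), |q x| ≤ qbar :=
    hq.mono fun x hx => (abs_of_nonneg hx.1).trans_le hx.2
  have hkey := integral_sub_mul_pow_mul_eq_of_weak
    (integrableOn_matrixPairing hσmeas hΛ hσbd hu hv hvc)
    (integrableOn_matrixPairing hσmeas hΛ hσbd hudag hv hvc)
    (integrableOn_bdd_mul_mul hqmeas.aestronglyMeasurable hqb (hu.continuous.pow m)
      hv.continuous hvc)
    (integrableOn_bdd_mul_mul hqmeas.aestronglyMeasurable hqb (hudag.continuous.pow m)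
      hv.continuous hvc)
    (integrableOn_bdd_mul_mul hqdagmeas.aestronglyMeasurable
      (ae_restrict_of_forall_mem hΩm hqdagbd) (hudag.continuous.pow m) hv.continuous hvc)
    (hweak v hv hvc hvs) (hweakdag v hv hvc hvs)
  have hpq : p.HolderConjugate p' :=
    (Real.holderConjugate_iff_eq_conjExponent (by linarith)).mpr hp'
  have hA := abs_integral_matrixPairing_sub_le hΩm hpq hΛ hσbd hu hudag hgb hgdagb hv hvc
  have hQ := abs_integral_mul_pow_sub_pow_mul_le m hΩm hpq hqbar hCA hqb hu.continuous
    hudag.continuous hub hudagb hv.continuous hvc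
  rw [Fintype.card_fin] at hA
  rw [hkey, mul_assoc _ (_ + _), add_mul]
  refine (abs_add_le _ _).trans (add_le_add (hA.trans ?_) (hQ.trans ?_)) <;> gcongr
  exacts [le_add_of_nonneg_left (by positivity), le_add_of_nonneg_left (by positivity),
    le_add_of_nonneg_right (by positivity), le_add_of_nonneg_right (by positivity)]

/-- Core estimate of the conditional stability theorem: the duality pairing of
`(q† - q)(u†)^m` against a test function `v` is bounded by
`(nΛ + m q̄ C_A^{m-1}) ‖u - u†‖_{W^{1,p}(Ω)} ‖v‖_{W^{1,p'}(Ω)}`. -/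
theorem stmt_8 (n : ℕ) (hn : 1 ≤ n) (Ω : Set (EuclideanSpace ℝ (Fin n)))
    (hΩo : IsOpen Ω) (hΩne : Ω.Nonempty) (hΩb : Bornology.IsBounded Ω)
    (m l : ℕ) (hm : m = 2 * l + 1)
    (σ : EuclideanSpace ℝ (Fin n) → Matrix (Fin n) (Fin n) ℝ)
    (hσmeas : ∀ i j, Measurable fun x => σ x i j)
    (Λ : ℝ) (hσbd : ∀ᵐ x ∂(volume.restrict Ω), ∀ i j, |σ x i j| ≤ Λ)
    (f : EuclideanSpace ℝ (Fin n) → ℝ) (hf : IntegrableOn f Ω)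
    (q qdag : EuclideanSpace ℝ (Fin n) → ℝ)
    (hqmeas : Measurable q) (hqdagmeas : Measurable qdag)
    (qbar : ℝ) (hq : ∀ᵐ x ∂(volume.restrict Ω), 0 ≤ q x ∧ q x ≤ qbar)
    (Mdag : ℝ) (hqdagbd : ∀ x ∈ Ω, |qdag x| ≤ Mdag)
    (p p' : ℝ) (hp : 2 ≤ p) (hp' : p' = p / (p - 1))
    (u udag : EuclideanSpace ℝ (Fin n) → ℝ)
    (hu : ContDiff ℝ 1 u) (hudag : ContDiff ℝ 1 udag)
    (CA : ℝ) (hub : ∀ x ∈ Ω, |u x| ≤ CA) (hudagb : ∀ x ∈ Ω, |udag x| ≤ CA)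
    (Mg : ℝ) (hgb : ∀ x ∈ Ω, ‖fderiv ℝ u x‖ ≤ Mg)
    (hgdagb : ∀ x ∈ Ω, ‖fderiv ℝ udag x‖ ≤ Mg)
    (hweak : ∀ v : EuclideanSpace ℝ (Fin n) → ℝ, ContDiff ℝ 1 v →
      HasCompactSupport v → tsupport v ⊆ Ω →
      (∫ x in Ω, ∑ i, ∑ j, σ x i j * fderiv ℝ u x (EuclideanSpace.single j 1) *
          fderiv ℝ v x (EuclideanSpace.single i 1)) +
        ∫ x in Ω, q x * u x ^ m * v x = ∫ x in Ω, f x * v x)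
    (hweakdag : ∀ v : EuclideanSpace ℝ (Fin n) → ℝ, ContDiff ℝ 1 v →
      HasCompactSupport v → tsupport v ⊆ Ω →
      (∫ x in Ω, ∑ i, ∑ j, σ x i j * fderiv ℝ udag x (EuclideanSpace.single j 1) *
          fderiv ℝ v x (EuclideanSpace.single i 1)) +
        ∫ x in Ω, qdag x * udag x ^ m * v x = ∫ x in Ω, f x * v x) :
    ∀ v : EuclideanSpace ℝ (Fin n) → ℝ, ContDiff ℝ 1 v →
      HasCompactSupport v → tsupport v ⊆ Ω →
      |∫ x in Ω, (qdag x - q x) * udag x ^ m * v x| ≤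
        ((n : ℝ) * Λ + (m : ℝ) * qbar * CA ^ (m - 1)) *
          ((∫ x in Ω, |u x - udag x| ^ p) ^ (1 / p) +
            (∫ x in Ω, ‖fderiv ℝ u x - fderiv ℝ udag x‖ ^ p) ^ (1 / p)) *
          ((∫ x in Ω, |v x| ^ p') ^ (1 / p') +
            (∫ x in Ω, ‖fderiv ℝ v x‖ ^ p') ^ (1 / p')) :=
  stmt_8_general n hn Ω hΩo hΩne hΩb m σ hσmeas Λ hσbd f q qdag hqmeas hqdagmeas qbar hq Mdag
    hqdagbd p p' hp hp' u udag hu hudag CA hub hudagb Mg hgb hgdagb hweak hweakdag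
end
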